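/- Let ν > 0 and ξ ∈ ℝ². Let D be a real symmetric 2×2 matrix with det D = 0, and write s := trace D. Let μ ∈ ℂ satisfy Re μ > 0 and μ ≠ s, and set λ := ν μ² − ν|ξ|². Let f : [0,∞) → ℂ² be continuous with compact support. Define u(y) := ∫₀^∞ (1/(2νμ)) (e^{−μ|y−z|} + e^{−μ(y+z)}) f(z) dz + ∫₀^∞ (e^{−μ(y+z)}/(ν μ (μ − s))) (D f(z)) dz for y ≥ 0. Then u is twice differentiable on (0,∞) with λ u(y) − ν (u''(y) − |ξ|² u(y)) = f(y) for every y > 0, and u'(0) + D u(0) = 0, where u'(0) is the one-sided derivative at 0. -/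

import Mathlib

/-!
Splitting `∫₀^∞ e^{-μ|y-z|} f(z) dz` at `z = y` writes `u` on `[0, ∞)` as
`c (w_{-μ} - w_μ)(y) + e^{μy} A + e^{-μy} B` with `c = 1/(2νμ)`, where the Duhamel integral
`w_μ(y) = ∫₀^y e^{μ(y-t)} f(t) dt` solves `w' = μ w + f`. Hence `u'' = μ² u - 2μc f`, which is the
resolvent equation because `2νμc = 1`. At `y = 0` the boundary operator leaves a scalar multiple
of `D L`, `L` being the Laplace transform of `f` at `μ`; since `det D = 0`, Cayley–Hamilton gives
`D² = (tr D) D`, and the reflection coefficient `1/(νμ(μ - tr D))` is exactly the one that makes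
this multiple vanish.
-/

open MeasureTheory Set Complex

noncomputable section

lemma Matrix.mul_self_eq_trace_smul_of_det_eq_zero {R : Type*} [CommRing R]
    (A : Matrix (Fin 2) (Fin 2) R) (h : A.det = 0) : A * A = A.trace • A := by
  rw [Matrix.det_fin_two] at h
  ext i j
  fin_cases i <;> fin_cases j <;>
    simp only [Fin.zero_eta, Fin.mk_one, Fin.isValue, Matrix.mul_apply, Fin.sum_univ_two,
      Matrix.trace_fin_two, Matrix.smul_apply, smul_eq_mul] <;>
    first | ring1 | linear_combination -h

lemma hasDerivAt_cexp_mul_ofReal (μ : ℂ) (y : ℝ) :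
    HasDerivAt (fun t : ℝ => cexp (μ * t)) (μ * cexp (μ * y)) y := by
  simpa [mul_comm] using (((hasDerivAt_id y).ofReal_comp).const_mul μ).cexp

section Duhamel

variable {E : Type*} [NormedAddCommGroup E] [NormedSpace ℂ E] {μ c : ℂ} {f : ℝ → E}

def duhamel (μ : ℂ) (f : ℝ → E) (y : ℝ) : E :=
  cexp (μ * y) • ∫ t in (0 : ℝ)..y, cexp (-μ * t) • f t

def resolventSolution (μ c : ℂ) (f : ℝ → E) (A B : E) (y : ℝ) : E :=
  c • (duhamel (-μ) f y - duhamel μ f y) + cexp (μ * y) • A + cexp (-μ * y) • B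

def resolventSolutionDeriv (μ c : ℂ) (f : ℝ → E) (A B : E) (y : ℝ) : E :=
  (-μ * c) • (duhamel (-μ) f y + duhamel μ f y) + (μ * cexp (μ * y)) • A
    + (-μ * cexp (-μ * y)) • B

variable (A B : E)

@[simp] lemma duhamel_zero : duhamel μ f 0 = 0 := by simp [duhamel]

@[simp] lemma resolventSolution_zero : resolventSolution μ c f A B 0 = A + B := by
  simp [resolventSolution]

@[simp] lemma resolventSolutionDeriv_zero :
    resolventSolutionDeriv μ c f A B 0 = μ • (A - B) := by
  simp [resolventSolutionDeriv, neg_smul, sub_eq_add_neg]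

variable [CompleteSpace E]

theorem hasDerivAt_duhamel (μ : ℂ) (hf : Continuous f) (y : ℝ) :
    HasDerivAt (duhamel μ f) (μ • duhamel μ f y + f y) y := by
  have hcont : Continuous fun t : ℝ => cexp (-μ * t) • f t := by fun_prop
  have hprim : HasDerivAt (fun y => ∫ t in (0 : ℝ)..y, cexp (-μ * t) • f t)
      (cexp (-μ * y) • f y) y :=
    intervalIntegral.integral_hasDerivAt_right (hcont.intervalIntegrable 0 y)
      (hcont.stronglyMeasurableAtFilter _ _) hcont.continuousAt
  refine ((hasDerivAt_cexp_mul_ofReal μ y).smul hprim).congr_deriv ?_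
  rw [smul_smul, ← Complex.exp_add, neg_mul, add_neg_cancel, Complex.exp_zero, one_smul, duhamel,
    smul_smul, add_comm]

theorem hasDerivAt_resolventSolution (hf : Continuous f) (y : ℝ) :
    HasDerivAt (resolventSolution μ c f A B) (resolventSolutionDeriv μ c f A B y) y := by
  refine ((((hasDerivAt_duhamel (-μ) hf y).sub (hasDerivAt_duhamel μ hf y)).const_smul c).add
    ((hasDerivAt_cexp_mul_ofReal μ y).smul_const A)).add
    ((hasDerivAt_cexp_mul_ofReal (-μ) y).smul_const B) |>.congr_deriv ?_
  simp only [resolventSolutionDeriv]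
  module

theorem hasDerivAt_resolventSolutionDeriv (hf : Continuous f) (y : ℝ) :
    HasDerivAt (resolventSolutionDeriv μ c f A B)
      (μ ^ 2 • resolventSolution μ c f A B y - (2 * μ * c) • f y) y := by
  refine ((((hasDerivAt_duhamel (-μ) hf y).add (hasDerivAt_duhamel μ hf y)).const_smul
    (-μ * c)).add (((hasDerivAt_cexp_mul_ofReal μ y).const_mul μ).smul_const A)).add
    (((hasDerivAt_cexp_mul_ofReal (-μ) y).const_mul (-μ)).smul_const B) |>.congr_deriv ?_
  simp only [resolventSolution]
  module

theorem differentiable_resolventSolution (hf : Continuous f) :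
    Differentiable ℝ (resolventSolution μ c f A B) :=
  fun y => (hasDerivAt_resolventSolution A B hf y).differentiableAt

theorem deriv_deriv_of_eventuallyEq_resolventSolution {u : ℝ → E} {y : ℝ} (hf : Continuous f)
    (hu : u =ᶠ[nhds y] resolventSolution μ c f A B) :
    DifferentiableAt ℝ u y ∧ DifferentiableAt ℝ (deriv u) y ∧
      deriv (deriv u) y = μ ^ 2 • u y - (2 * μ * c) • f y := by
  have hu' : deriv u =ᶠ[nhds y] resolventSolutionDeriv μ c f A B :=
    hu.deriv.trans (.of_forall fun z => (hasDerivAt_resolventSolution A B hf z).deriv)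
  have h2 := (hasDerivAt_resolventSolutionDeriv A B hf y).congr_of_eventuallyEq hu'
  refine ⟨((hasDerivAt_resolventSolution A B hf y).congr_of_eventuallyEq hu).differentiableAt,
    h2.differentiableAt, ?_⟩
  rw [h2.deriv, hu.eq_of_nhds]

end Duhamel

section HalfLine

variable {E : Type*} [NormedAddCommGroup E] [NormedSpace ℂ E]

def laplaceTransform (μ : ℂ) (f : ℝ → E) : E := ∫ z in Ioi (0 : ℝ), cexp (-μ * z) • f z

lemma integral_cexp_neg_mul_add_smul (μ : ℂ) (y : ℝ) (ρ : Measure ℝ) (g : ℝ → E) :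
    ∫ z, cexp (-μ * ((y + z : ℝ) : ℂ)) • g z ∂ρ = cexp (-μ * y) • ∫ z, cexp (-μ * z) • g z ∂ρ := by
  simp_rw [ofReal_add, mul_add, Complex.exp_add, mul_smul]
  exact integral_smul _ _

theorem integral_Ioi_cexp_abs_sub_smul [CompleteSpace E] (μ : ℂ) {f : ℝ → E} (hf : Continuous f)
    (hint : IntegrableOn (fun z : ℝ => cexp (-μ * z) • f z) (Ioi 0)) {y : ℝ} (hy : 0 ≤ y) :
    ∫ z in Ioi (0 : ℝ), cexp (-μ * (|y - z| : ℝ)) • f z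
      = duhamel (-μ) f y - duhamel μ f y + cexp (μ * y) • laplaceTransform μ f := by
  have hnear : EqOn (fun z : ℝ => cexp (-μ * (|y - z| : ℝ)) • f z)
      (fun z => cexp (-μ * y) • (cexp (- -μ * z) • f z)) (uIcc 0 y) := by
    intro z hz
    rw [uIcc_of_le hy] at hz
    simp only [abs_of_nonneg (sub_nonneg.2 hz.2), smul_smul, ← Complex.exp_add]
    congr 2; push_cast; ring
  have hfar : EqOn (fun z : ℝ => cexp (-μ * (|y - z| : ℝ)) • f z)
      (fun z => cexp (μ * y) • (cexp (-μ * z) • f z)) (Ioi y) := by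
    intro z hz
    simp only [abs_sub_comm y z, abs_of_pos (sub_pos.2 (mem_Ioi.1 hz)), smul_smul,
      ← Complex.exp_add]
    congr 2; push_cast; ring
  have hfarInt : IntegrableOn (fun z : ℝ => cexp (-μ * (|y - z| : ℝ)) • f z) (Ioi y) :=
    IntegrableOn.congr_fun ((hint.mono_set (Ioi_subset_Ioi hy)).smul (cexp (μ * y))) hfar.symm
      measurableSet_Ioi
  rw [← intervalIntegral.integral_interval_add_Ioi'
      ((by fun_prop : Continuous _).intervalIntegrable 0 y) hfarInt,
    intervalIntegral.integral_congr hnear, setIntegral_congr_fun measurableSet_Ioi hfar,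
    intervalIntegral.integral_smul, integral_smul]
  simp only [duhamel, laplaceTransform]
  rw [← intervalIntegral.integral_Ioi_sub_Ioi hint hy]
  module

end HalfLine

section Robin

open Matrix

variable {n : Type*} [Fintype n]

def robinSolution (ν μ : ℂ) (M : Matrix n n ℂ) (f : ℝ → n → ℂ) : ℝ → n → ℂ :=
  resolventSolution μ (2 * ν * μ)⁻¹ f ((2 * ν * μ)⁻¹ • laplaceTransform μ f)
    ((2 * ν * μ)⁻¹ • laplaceTransform μ f
      + (ν * μ * (μ - M.trace))⁻¹ • M *ᵥ laplaceTransform μ f)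

theorem robinSolution_eq_integral (ν μ : ℂ) (M : Matrix n n ℂ) {f : ℝ → n → ℂ}
    (hf : Continuous f) (hfc : HasCompactSupport f) {y : ℝ} (hy : 0 ≤ y) :
    robinSolution ν μ M f y =
      (∫ z in Ioi (0 : ℝ), ((1 / (2 * ν * μ)) *
          (cexp (-μ * (|y - z| : ℝ)) + cexp (-μ * ((y + z : ℝ) : ℂ)))) • f z)
        + ∫ z in Ioi (0 : ℝ), (cexp (-μ * ((y + z : ℝ) : ℂ)) / (ν * μ * (μ - M.trace))) •
            M *ᵥ f z := by
  have hint : ∀ g : ℝ → ℂ, Continuous g → IntegrableOn (fun z => g z • f z) (Ioi 0) :=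
    fun g hg => ((hg.smul hf).integrable_of_hasCompactSupport hfc.smul_left).integrableOn
  have hML : M *ᵥ laplaceTransform μ f = ∫ z in Ioi (0 : ℝ), cexp (-μ * z) • M *ᵥ f z := by
    simp_rw [laplaceTransform, ← mulVec_smul]
    exact (M.mulVecLin.toContinuousLinearMap.integral_comp_comm (hint _ (by fun_prop))).symm
  simp_rw [mul_add, add_smul, mul_smul, ← smul_add, div_eq_inv_mul, mul_smul, one_smul,
    integral_smul]
  rw [integral_add (hint _ (by fun_prop)) (hint _ (by fun_prop)),
    integral_Ioi_cexp_abs_sub_smul μ hf (hint _ (by fun_prop)) hy,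
    integral_cexp_neg_mul_add_smul, integral_cexp_neg_mul_add_smul, ← hML]
  simp only [robinSolution, resolventSolution, laplaceTransform]
  module

theorem deriv_robinSolution_zero_add_mulVec_eq_zero {ν μ : ℂ} (hν : ν ≠ 0) (hμ : μ ≠ 0)
    {M : Matrix n n ℂ} (hμM : μ ≠ M.trace) (hM : M * M = M.trace • M) {f : ℝ → n → ℂ}
    (hf : Continuous f) :
    deriv (robinSolution ν μ M f) 0 + M *ᵥ robinSolution ν μ M f 0 = 0 := by
  simp only [robinSolution]
  rw [(hasDerivAt_resolventSolution _ _ hf 0).deriv]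
  simp only [resolventSolution_zero, resolventSolutionDeriv_zero, mulVec_add, mulVec_smul,
    mulVec_mulVec, hM, smul_mulVec]
  have hμM' : μ - M.trace ≠ 0 := sub_ne_zero.2 hμM
  match_scalars <;> field_simp <;> ring

end Robin

theorem robin_resolvent_green_function_general
    (ν : ℝ) (hν : 0 < ν) (ξ₁ ξ₂ : ℝ)
    (D : Matrix (Fin 2) (Fin 2) ℝ) (hDdet : D.det = 0)
    (μ : ℂ) (hμre : 0 < μ.re) (hμs : μ ≠ (D.trace : ℂ))
    (lam : ℂ) (hlam : lam = (ν : ℂ) * μ ^ 2 - (ν : ℂ) * ((ξ₁ ^ 2 + ξ₂ ^ 2 : ℝ) : ℂ))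
    (f : ℝ → Fin 2 → ℂ) (hf : Continuous f) (hfc : HasCompactSupport f)
    (u : ℝ → Fin 2 → ℂ)
    (hu : ∀ y, u y =
      (∫ z in Ioi (0 : ℝ),
        ((1 / (2 * (ν : ℂ) * μ)) *
          (Complex.exp (-μ * (|y - z| : ℝ)) + Complex.exp (-μ * ((y + z : ℝ) : ℂ)))) • f z)
      + ∫ z in Ioi (0 : ℝ),
          (Complex.exp (-μ * ((y + z : ℝ) : ℂ)) / ((ν : ℂ) * μ * (μ - (D.trace : ℂ)))) •
            (D.map (Complex.ofReal)).mulVec (f z)) :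
    (∀ y ∈ Ioi (0 : ℝ),
        DifferentiableAt ℝ u y ∧ DifferentiableAt ℝ (deriv u) y ∧
        lam • u y - (ν : ℂ) • (deriv (deriv u) y - ((ξ₁ ^ 2 + ξ₂ ^ 2 : ℝ) : ℂ) • u y) = f y)
    ∧ derivWithin u (Ici 0) 0 + (D.map (Complex.ofReal)).mulVec (u 0) = 0 := by
  have hν0 : (ν : ℂ) ≠ 0 := ofReal_ne_zero.2 hν.ne'
  have hμ0 : μ ≠ 0 := by rintro rfl; simp at hμre
  set M := D.map ofReal
  have htr : M.trace = D.trace := (AddMonoidHom.map_trace ofRealHom D).symm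
  have hdet : M.det = ofRealHom D.det := (RingHom.map_det ofRealHom D).symm
  have hM : M * M = M.trace • M :=
    M.mul_self_eq_trace_smul_of_det_eq_zero (by rw [hdet, hDdet, map_zero])
  have hug : EqOn u (robinSolution ν μ M f) (Ici 0) := fun y hy => by
    rw [hu, robinSolution_eq_integral _ _ _ hf hfc hy, htr]
  refine ⟨fun y hy => ?_, ?_⟩
  · obtain ⟨hd, hd2, hode⟩ := deriv_deriv_of_eventuallyEq_resolventSolution _ _ hf
      (hug.eventuallyEq_of_mem (Ici_mem_nhds hy))
    refine ⟨hd, hd2, ?_⟩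
    have hνc : (ν : ℂ) * (2 * μ * (2 * ν * μ)⁻¹) = 1 := by field_simp
    rw [hode, hlam]
    linear_combination (norm := module) hνc • f y
  · have hdiff : Differentiable ℝ (robinSolution ν μ M f) :=
      differentiable_resolventSolution _ _ hf
    rw [← htr] at hμs
    rw [derivWithin_congr hug (hug self_mem_Ici),
      (hdiff 0).derivWithin (uniqueDiffWithinAt_Ici 0), hug self_mem_Ici]
    exact deriv_robinSolution_zero_add_mulVec_eq_zero hν0 hμ0 hμs hM hf

/-- The explicit resolvent for the half-line Laplacian with the general Robin-type boundary
condition u'(0) + D u(0) = 0, where D is a real symmetric 2×2 matrix with det D = 0. -/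
theorem robin_resolvent_green_function
    (ν : ℝ) (hν : 0 < ν) (ξ₁ ξ₂ : ℝ)
    (D : Matrix (Fin 2) (Fin 2) ℝ) (hDsymm : D.IsSymm) (hDdet : D.det = 0)
    (μ : ℂ) (hμre : 0 < μ.re) (hμs : μ ≠ (D.trace : ℂ))
    (lam : ℂ) (hlam : lam = (ν : ℂ) * μ ^ 2 - (ν : ℂ) * ((ξ₁ ^ 2 + ξ₂ ^ 2 : ℝ) : ℂ))
    (f : ℝ → Fin 2 → ℂ) (hf : Continuous f) (hfc : HasCompactSupport f)
    (u : ℝ → Fin 2 → ℂ)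
    (hu : ∀ y, u y =
      (∫ z in Ioi (0 : ℝ),
        ((1 / (2 * (ν : ℂ) * μ)) *
          (Complex.exp (-μ * (|y - z| : ℝ)) + Complex.exp (-μ * ((y + z : ℝ) : ℂ)))) • f z)
      + ∫ z in Ioi (0 : ℝ),
          (Complex.exp (-μ * ((y + z : ℝ) : ℂ)) / ((ν : ℂ) * μ * (μ - (D.trace : ℂ)))) •
            (D.map (Complex.ofReal)).mulVec (f z)) :
    (∀ y ∈ Ioi (0 : ℝ),
        DifferentiableAt ℝ u y ∧ DifferentiableAt ℝ (deriv u) y ∧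
        lam • u y - (ν : ℂ) • (deriv (deriv u) y - ((ξ₁ ^ 2 + ξ₂ ^ 2 : ℝ) : ℂ) • u y) = f y)
    ∧ derivWithin u (Ici 0) 0 + (D.map (Complex.ofReal)).mulVec (u 0) = 0 :=
  robin_resolvent_green_function_general ν hν ξ₁ ξ₂ D hDdet μ hμre hμs lam hlam f hf hfc u hu
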